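/- Let r ≥ 1 and let m_1, …, m_r ≥ 1 satisfy gcd(q_{m_i}, q_{m_j}) = 1 for all 1 ≤ i < j ≤ r, where q_k = (k+1)^k − 1. Let F be the free group on 2r generators x_{m_1}, t_{m_1}, …, x_{m_r}, t_{m_r}, and let R be the normal closure in F of {ρ_{m_1}(x_{m_1},t_{m_1}), x_{m_1}^{m_1}, …, ρ_{m_r}(x_{m_r},t_{m_r}), x_{m_r}^{m_r}}. Then R equals the join (inside F) of the normal closure of the r+1 elements {ρ_{m_1}(x_{m_1},t_{m_1}), …, ρ_{m_r}(x_{m_r},t_{m_r}), x_{m_1}^{m_1} x_{m_2}^{m_2} ⋯ x_{m_r}^{m_r}} and the commutator subgroup [R, R]. -/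

import Mathlib

/-- The word `ρ_k(x,t) = (t x t⁻¹) x (t x t⁻¹)⁻¹ x^{-(k+1)}`, evaluated at elements
`x`, `t` of a group. -/
def rhoWord {G : Type*} [Group G] (k : ℕ) (x t : G) : G :=
  (t * x * t⁻¹) * x * (t * x * t⁻¹)⁻¹ * x ^ (-(k + 1 : ℤ))

/-- `q_k = (k+1)^k - 1`. -/
def q (k : ℕ) : ℕ := (k + 1) ^ k - 1

/-!
Let `N` be the right-hand side; only `x_i^{m_i} ∈ N` needs proof. Modulo `N` any two elements
of `R` commute. There, `ρ_k(x,t) = 1` says that `c = t x t⁻¹` conjugates `x` to `x^{k+1}`, so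
`c^k = t x^k t⁻¹` conjugates `x^k` to `(x^k)^{(k+1)^k}`; as `t x^k t⁻¹` and `x^k` both lie in `R`
they commute, whence `(x^k)^{q_k} = 1`. The images of the `x_i^{m_i}` are thus commuting elements
of pairwise coprime orders whose product is `1`, so each of them is `1`.
-/

open scoped commutatorElement IsMulCommutative

theorem eq_one_of_prod_eq_one_of_pow_eq_one {ι A : Type*} [Fintype ι] [CommGroup A]
    {b : ι → A} {n : ι → ℕ} (hn : Pairwise fun i j => Nat.Coprime (n i) (n j))
    (hb : ∀ j, b j ^ n j = 1) (hprod : ∏ j, b j = 1) (i : ι) : b i = 1 := by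
  classical
  set Q := ∏ j ∈ Finset.univ.erase i, n j
  have hbQ : b i ^ Q = 1 := by
    have hothers : ∀ j ∈ Finset.univ.erase i, b j ^ Q = 1 := fun j hj => by
      obtain ⟨c, hc⟩ : n j ∣ Q := Finset.dvd_prod_of_mem n hj
      rw [hc, pow_mul, hb, one_pow]
    calc b i ^ Q = b i ^ Q * ∏ j ∈ Finset.univ.erase i, b j ^ Q := by
          rw [Finset.prod_eq_one hothers, mul_one]
      _ = (∏ j, b j) ^ Q := by
          rw [Finset.mul_prod_erase Finset.univ (b · ^ Q) (Finset.mem_univ i), Finset.prod_pow]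
      _ = 1 := by rw [hprod, one_pow]
  have hcop : Nat.Coprime (n i) Q :=
    Nat.Coprime.prod_right fun j hj => hn (Finset.ne_of_mem_erase hj).symm
  simpa [hcop.gcd_eq_one] using pow_gcd_eq_one.2 ⟨hb i, hbQ⟩

section Group

variable {G : Type*} [Group G]

theorem SemiconjBy.pow_left_of_pow_right {c x : G} {a : ℕ} (h : SemiconjBy c x (x ^ a)) :
    ∀ j : ℕ, SemiconjBy (c ^ j) x (x ^ a ^ j)
  | 0 => by simp
  | j + 1 => by
    rw [pow_succ', pow_succ, pow_mul']
    exact (h.pow_right _).mul_left (h.pow_left_of_pow_right j)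

theorem pow_pow_sub_one_eq_one_of_semiconjBy {c x : G} {a j n : ℕ}
    (h : SemiconjBy c x (x ^ a)) (hc : Commute (c ^ j) (x ^ n)) :
    (x ^ n) ^ (a ^ j - 1) = 1 := by
  have hconj : SemiconjBy (c ^ j) (x ^ n) ((x ^ n) ^ a ^ j) := by
    rw [← pow_mul, mul_comm, pow_mul]
    exact (h.pow_left_of_pow_right j).pow_right n
  have hfix : (x ^ n) ^ a ^ j = x ^ n := mul_right_cancel (hconj.symm.trans hc)
  rcases eq_or_ne (a ^ j) 0 with h0 | h0
  · simp [h0]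
  · rwa [← pow_sub_one_mul h0, mul_eq_right] at hfix

theorem rhoWord_eq_one_iff {k : ℕ} {x t : G} :
    rhoWord k x t = 1 ↔ SemiconjBy (t * x * t⁻¹) x (x ^ (k + 1)) := by
  rw [rhoWord, zpow_neg, mul_inv_eq_one, mul_inv_eq_iff_eq_mul]
  norm_cast

theorem pow_q_eq_one_of_rhoWord_eq_one {k : ℕ} {x t : G} (hρ : rhoWord k x t = 1)
    (hc : Commute (t * x ^ k * t⁻¹) (x ^ k)) : (x ^ k) ^ q k = 1 := by
  rw [← conj_pow] at hc
  exact pow_pow_sub_one_eq_one_of_semiconjBy (rhoWord_eq_one_iff.1 hρ) hc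

theorem map_rhoWord {H F : Type*} [Group H] [FunLike F G H] [MonoidHomClass F G H] (f : F)
    (k : ℕ) (x t : G) : f (rhoWord k x t) = rhoWord k (f x) (f t) := by
  simp [rhoWord]

theorem eq_one_of_list_prod_eq_one_of_pow_eq_one {r : ℕ} {b : Fin r → G} {n : Fin r → ℕ}
    (hcomm : ∀ i j, Commute (b i) (b j))
    (hn : Pairwise fun i j => Nat.Coprime (n i) (n j)) (hb : ∀ j, b j ^ n j = 1)
    (hprod : ((List.finRange r).map b).prod = 1) (i : Fin r) : b i = 1 := by
  let H := Subgroup.closure (Set.range b)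
  have : IsMulCommutative H := Subgroup.isMulCommutative_closure <| by
    rintro _ ⟨i, rfl⟩ _ ⟨j, rfl⟩
    exact hcomm i j
  let b' : Fin r → H := fun j => ⟨b j, Subgroup.subset_closure ⟨j, rfl⟩⟩
  have hprod' : ∏ j, b' j = 1 := Subtype.ext <| by
    rwa [Fin.prod_univ_def, Subgroup.val_list_prod, List.map_map]
  exact congrArg Subtype.val
    (eq_one_of_prod_eq_one_of_pow_eq_one hn (fun j => Subtype.ext (hb j)) hprod' i)

theorem QuotientGroup.commute_mk_of_commutator_le {R N : Subgroup G} [N.Normal] (hRN : ⁅R, R⁆ ≤ N)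
    {u v : G} (hu : u ∈ R) (hv : v ∈ R) :
    Commute (u : G ⧸ N) (v : G ⧸ N) := by
  rw [← commutatorElement_eq_one_iff_commute]
  exact (QuotientGroup.eq_one_iff _).2 (hRN (Subgroup.commutator_mem_commutator hu hv))

theorem pow_mem_of_rhoWord_mem {r : ℕ} {m : Fin r → ℕ}
    (hq : Pairwise fun i j => Nat.Coprime (q (m i)) (q (m j))) {x t : Fin r → G}
    {R N : Subgroup G} [hRn : R.Normal] [N.Normal] (hRN : ⁅R, R⁆ ≤ N) (hxR : ∀ j, x j ^ m j ∈ R)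
    (hρ : ∀ j, rhoWord (m j) (x j) (t j) ∈ N)
    (hprod : ((List.finRange r).map fun j => x j ^ m j).prod ∈ N) (i : Fin r) :
    x i ^ m i ∈ N := by
  rw [← QuotientGroup.eq_one_iff]
  refine eq_one_of_list_prod_eq_one_of_pow_eq_one (b := fun j => ((x j ^ m j : G) : G ⧸ N))
    (fun i j => QuotientGroup.commute_mk_of_commutator_le hRN (hxR i) (hxR j)) hq (fun j => ?_) ?_ i
  · have hρ' := (QuotientGroup.eq_one_iff _).2 (hρ j)
    rw [← QuotientGroup.mk'_apply, map_rhoWord] at hρ'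
    have hc := QuotientGroup.commute_mk_of_commutator_le hRN
      (hRn.conj_mem _ (hxR j) (t j)) (hxR j)
    exact pow_q_eq_one_of_rhoWord_eq_one hρ' hc
  · have hprod' := (QuotientGroup.eq_one_iff _).2 hprod
    rwa [← QuotientGroup.mk'_apply, map_list_prod, List.map_map] at hprod'

end Group

theorem relationModule_r_plus_one_generators_general (r : ℕ)
    (m : Fin r → ℕ)
    (hq : ∀ i j, i ≠ j → Nat.gcd (q (m i)) (q (m j)) = 1)
    (x t : Fin r → FreeGroup (Fin r × Bool))
    (R : Subgroup (FreeGroup (Fin r × Bool)))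
    (hR : R = Subgroup.normalClosure
      ((Set.range fun i => rhoWord (m i) (x i) (t i)) ∪
        (Set.range fun i => (x i) ^ (m i)))) :
    R = Subgroup.normalClosure
        ((Set.range fun i => rhoWord (m i) (x i) (t i)) ∪
          {((List.finRange r).map fun i => (x i) ^ (m i)).prod}) ⊔ ⁅R, R⁆ := by
  have : R.Normal := hR ▸ Subgroup.normalClosure_normal
  have hxR (j : Fin r) : x j ^ m j ∈ R := hR ▸ Subgroup.subset_normalClosure (Or.inr ⟨j, rfl⟩)
  have hρR (j : Fin r) : rhoWord (m j) (x j) (t j) ∈ R :=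
    hR ▸ Subgroup.subset_normalClosure (Or.inl ⟨j, rfl⟩)
  apply le_antisymm
  · conv_lhs => rw [hR]
    refine Subgroup.normalClosure_le_normal ?_
    rintro _ (⟨j, rfl⟩ | ⟨j, rfl⟩)
    · exact Subgroup.mem_sup_left (Subgroup.subset_normalClosure (Or.inl ⟨j, rfl⟩))
    · exact pow_mem_of_rhoWord_mem hq le_sup_right hxR
        (fun j => Subgroup.mem_sup_left (Subgroup.subset_normalClosure (Or.inl ⟨j, rfl⟩)))
        (Subgroup.mem_sup_left (Subgroup.subset_normalClosure (Or.inr rfl))) j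
  · refine sup_le (Subgroup.normalClosure_le_normal ?_) (Subgroup.commutator_le_left R R)
    rintro _ (⟨j, rfl⟩ | rfl)
    · exact hρR j
    · exact list_prod_mem (by simpa using hxR)

/-- Let `r ≥ 1` and `m_1, …, m_r ≥ 1` with `gcd(q_{m_i}, q_{m_j}) = 1` for
`i ≠ j`.  In the free group `F` on `2r` generators `x_1, t_1, …, x_r, t_r` (here the
generator indexed by `(i, false)` is `x_i` and the one indexed by `(i, true)` is `t_i`),
let `R` be the normal closure of `{ρ_{m_i}(x_i,t_i), x_i^{m_i} : 1 ≤ i ≤ r}`.  Then `R`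
equals the join of the normal closure of the `r + 1` elements
`{ρ_{m_1}(x_1,t_1), …, ρ_{m_r}(x_r,t_r), x_1^{m_1} x_2^{m_2} ⋯ x_r^{m_r}}` and the
commutator subgroup `[R, R]`. -/
theorem relationModule_r_plus_one_generators (r : ℕ) (hr : 1 ≤ r)
    (m : Fin r → ℕ) (hm : ∀ i, 1 ≤ m i)
    (hq : ∀ i j, i ≠ j → Nat.gcd (q (m i)) (q (m j)) = 1)
    (x t : Fin r → FreeGroup (Fin r × Bool))
    (hx : ∀ i, x i = FreeGroup.of (i, false)) (ht : ∀ i, t i = FreeGroup.of (i, true))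
    (R : Subgroup (FreeGroup (Fin r × Bool)))
    (hR : R = Subgroup.normalClosure
      ((Set.range fun i => rhoWord (m i) (x i) (t i)) ∪
        (Set.range fun i => (x i) ^ (m i)))) :
    R = Subgroup.normalClosure
        ((Set.range fun i => rhoWord (m i) (x i) (t i)) ∪
          {((List.finRange r).map fun i => (x i) ^ (m i)).prod}) ⊔ ⁅R, R⁆ :=
  relationModule_r_plus_one_generators_general r m hq x t R hR
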